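/- Let Z ∈ ker(R_p) be nonzero (R_p(Z) = 0) and suppose there exist Y ∈ range(R_p) and W ∈ T⊥ with ‖W‖ ≤ 1, ⟨W, P_{T⊥}(Z)⟩ = ‖P_{T⊥}(Z)‖_*, such that ‖U_r V_r^T − λ P_T(Φ) − P_T(Y)‖_F ≤ a and ‖λ P_{T⊥}(Φ) + P_{T⊥}(Y)‖ ≤ b with b < 1. Then ⟨U_r V_r^T + W − λΦ − Y, Z⟩ ≥ −a‖P_T(Z)‖_F + (1 − b)‖P_{T⊥}(Z)‖_F. -/

import Mathlib

open Matrix BigOperators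

noncomputable def frob {m n : ℕ} (A : Matrix (Fin m) (Fin n) ℝ) : ℝ :=
  Real.sqrt (∑ i, ∑ j, (A i j)^2)

noncomputable def spec {m n : ℕ} (A : Matrix (Fin m) (Fin n) ℝ) : ℝ :=
  ‖LinearMap.toContinuousLinearMap (Matrix.toEuclideanLin A)‖

noncomputable def nuclear {n : ℕ} (A : Matrix (Fin n) (Fin n) ℝ) : ℝ :=
  ∑ i, Real.sqrt ((show (Aᵀ * A).IsHermitian from Matrix.isHermitian_conjTranspose_mul_self A).eigenvalues i)

noncomputable def ip {n : ℕ} (A B : Matrix (Fin n) (Fin n) ℝ) : ℝ := (Aᵀ * B).trace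

noncomputable def PT {n r : ℕ} (U V : Matrix (Fin n) (Fin r) ℝ)
    (Z : Matrix (Fin n) (Fin n) ℝ) : Matrix (Fin n) (Fin n) ℝ :=
  U * Uᵀ * Z + Z * (V * Vᵀ) - U * Uᵀ * Z * (V * Vᵀ)

noncomputable def PTperp {n r : ℕ} (U V : Matrix (Fin n) (Fin r) ℝ)
    (Z : Matrix (Fin n) (Fin n) ℝ) : Matrix (Fin n) (Fin n) ℝ := Z - PT U V Z

noncomputable def rowTwo {m n : ℕ} (A : Matrix (Fin m) (Fin n) ℝ) : ℝ :=
  ⨆ i, Real.sqrt (∑ j, (A i j)^2)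

noncomputable def maxAbs {m n : ℕ} (A : Matrix (Fin m) (Fin n) ℝ) : ℝ :=
  ⨆ i, ⨆ j, |A i j|

/-!
Write `Φ` and `Y` as tangent plus normal parts. Then `U Vᵀ + W - λΦ - Y = X + W - R` with
`X = U Vᵀ - λ P_T Φ - P_T Y ∈ T` and `W, R ∈ T⊥`, and since `P_T` is an orthogonal projection,
`⟨X, Z⟩ = ⟨X, P_T Z⟩ ≥ -a ‖P_T Z‖_F` (Cauchy–Schwarz), `⟨W, Z⟩ = ‖P_T⊥ Z‖_*` and
`⟨R, Z⟩ = ⟨R, P_T⊥ Z⟩ ≤ b ‖P_T⊥ Z‖_*` (duality of the spectral and nuclear norms). It remains to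
use `‖·‖_F ≤ ‖·‖_*`. Both norm facts are computed in an orthonormal eigenbasis `(v j)` of `Nᵀ N`,
in which `‖N v j‖ = √λⱼ`.
-/

open scoped InnerProductSpace

section ip

variable {n : ℕ}

lemma ip_add_left (A B C : Matrix (Fin n) (Fin n) ℝ) : ip (A + B) C = ip A C + ip B C := by
  simp only [ip, transpose_add, Matrix.add_mul, trace_add]

lemma ip_sub_left (A B C : Matrix (Fin n) (Fin n) ℝ) : ip (A - B) C = ip A C - ip B C := by
  simp only [ip, transpose_sub, Matrix.sub_mul, trace_sub]

lemma ip_add_right (A B C : Matrix (Fin n) (Fin n) ℝ) : ip A (B + C) = ip A B + ip A C := by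
  simp only [ip, Matrix.mul_add, trace_add]

lemma ip_sub_right (A B C : Matrix (Fin n) (Fin n) ℝ) : ip A (B - C) = ip A B - ip A C := by
  simp only [ip, Matrix.mul_sub, trace_sub]

lemma ip_mul_left_of_symm {P : Matrix (Fin n) (Fin n) ℝ} (hP : Pᵀ = P)
    (A B : Matrix (Fin n) (Fin n) ℝ) :
    ip (P * A) B = ip A (P * B) := by
  rw [ip, ip, transpose_mul, hP, Matrix.mul_assoc]

lemma ip_mul_right_of_symm {Q : Matrix (Fin n) (Fin n) ℝ} (hQ : Qᵀ = Q)
    (A B : Matrix (Fin n) (Fin n) ℝ) :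
    ip (A * Q) B = ip A (B * Q) := by
  rw [ip, ip, transpose_mul, hQ, Matrix.mul_assoc, trace_mul_comm, Matrix.mul_assoc]

lemma ip_eq_sum_mul (A B : Matrix (Fin n) (Fin n) ℝ) :
    ip A B = ∑ i, ∑ j, A i j * B i j := by
  simp only [ip, trace, diag, mul_apply, transpose_apply]
  exact Finset.sum_comm

lemma frob_sq (A : Matrix (Fin n) (Fin n) ℝ) : frob A ^ 2 = ip A A := by
  rw [frob, Real.sq_sqrt (by positivity), ip_eq_sum_mul]
  simp only [sq]

lemma abs_ip_le_frob_mul_frob (A B : Matrix (Fin n) (Fin n) ℝ) :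
    |ip A B| ≤ frob A * frob B := by
  have cauchy_schwarz (f : Fin n → Fin n → ℝ) :
      ∑ i, ∑ j, f i j * B i j ≤ √(∑ i, ∑ j, f i j ^ 2) * frob B := by
    have h := Real.sum_mul_le_sqrt_mul_sqrt Finset.univ (fun p : Fin n × Fin n => f p.1 p.2)
      (fun p => B p.1 p.2)
    simpa only [Fintype.sum_prod_type, frob] using h
  rw [abs_le, ip_eq_sum_mul]
  constructor
  · have h := cauchy_schwarz fun i j => -A i j
    simp only [neg_mul, Finset.sum_neg_distrib, neg_sq] at h
    exact neg_le.mpr h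
  · exact cauchy_schwarz A

end ip

lemma Matrix.trace_eq_sum_inner_toEuclideanLin {𝕜 m ι : Type*} [RCLike 𝕜] [Fintype m]
    [DecidableEq m] [Fintype ι] (A : Matrix m m 𝕜)
    (b : OrthonormalBasis ι 𝕜 (EuclideanSpace 𝕜 m)) :
    A.trace = ∑ i, ⟪b i, toEuclideanLin A (b i)⟫_𝕜 := by
  rw [← LinearMap.trace_eq_sum_inner, Matrix.toEuclideanLin_eq_toLin_orthonormal,
    Matrix.trace_toLin_eq]

lemma Matrix.inner_toEuclideanLin_transpose_mul {m n : Type*} [Fintype m] [DecidableEq m]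
    [Fintype n] [DecidableEq n]
    (M N : Matrix m n ℝ) (v w : EuclideanSpace ℝ n) :
    ⟪v, toEuclideanLin (Mᵀ * N) w⟫_ℝ = ⟪toEuclideanLin M v, toEuclideanLin N w⟫_ℝ := by
  rw [toLpLin_mul_same, LinearMap.comp_apply, ← conjTranspose_eq_transpose_of_trivial,
    toEuclideanLin_conjTranspose_eq_adjoint, LinearMap.adjoint_inner_right]

lemma ip_eq_sum_inner {n : ℕ} {ι : Type*} [Fintype ι] (M N : Matrix (Fin n) (Fin n) ℝ)
    (b : OrthonormalBasis ι ℝ (EuclideanSpace ℝ (Fin n))) :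
    ip M N = ∑ i, ⟪toEuclideanLin M (b i), toEuclideanLin N (b i)⟫_ℝ := by
  simp only [ip, Matrix.trace_eq_sum_inner_toEuclideanLin _ b,
    Matrix.inner_toEuclideanLin_transpose_mul]

lemma norm_toEuclideanLin_le_spec {m n : ℕ} (M : Matrix (Fin m) (Fin n) ℝ)
    (v : EuclideanSpace ℝ (Fin n)) : ‖toEuclideanLin M v‖ ≤ spec M * ‖v‖ :=
  (LinearMap.toContinuousLinearMap (toEuclideanLin M)).le_opNorm v

lemma norm_sq_toEuclideanLin_eigenvectorBasis {n : ℕ} (N : Matrix (Fin n) (Fin n) ℝ)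
    (hN : (Nᵀ * N).IsHermitian) (j : Fin n) :
    ‖toEuclideanLin N (hN.eigenvectorBasis j)‖ ^ 2 = hN.eigenvalues j := by
  rw [← real_inner_self_eq_norm_sq, ← Matrix.inner_toEuclideanLin_transpose_mul, toLpLin_apply,
    WithLp.toLp_ofLp, hN.mulVec_eigenvectorBasis, WithLp.toLp_smul, WithLp.toLp_ofLp,
    inner_smul_right, real_inner_self_eq_norm_sq, hN.eigenvectorBasis.orthonormal.1 j, one_pow,
    mul_one]

lemma ip_le_spec_mul_nuclear {n : ℕ} (M N : Matrix (Fin n) (Fin n) ℝ) :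
    ip M N ≤ spec M * nuclear N := by
  set hN : (Nᵀ * N).IsHermitian := isHermitian_conjTranspose_mul_self N
  rw [ip_eq_sum_inner M N hN.eigenvectorBasis, nuclear, Finset.mul_sum]
  refine Finset.sum_le_sum fun j _ => ?_
  calc ⟪toEuclideanLin M (hN.eigenvectorBasis j), toEuclideanLin N (hN.eigenvectorBasis j)⟫_ℝ
      ≤ ‖toEuclideanLin M (hN.eigenvectorBasis j)‖ * ‖toEuclideanLin N (hN.eigenvectorBasis j)‖ :=
        real_inner_le_norm _ _
    _ ≤ spec M * ‖toEuclideanLin N (hN.eigenvectorBasis j)‖ := by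
        gcongr
        simpa only [hN.eigenvectorBasis.orthonormal.1 j, mul_one] using
          norm_toEuclideanLin_le_spec M (hN.eigenvectorBasis j)
    _ = spec M * √(hN.eigenvalues j) := by
        rw [← norm_sq_toEuclideanLin_eigenvectorBasis, Real.sqrt_sq (norm_nonneg _)]

lemma frob_nonneg {m n : ℕ} (A : Matrix (Fin m) (Fin n) ℝ) : 0 ≤ frob A := Real.sqrt_nonneg _

lemma nuclear_nonneg {n : ℕ} (N : Matrix (Fin n) (Fin n) ℝ) : 0 ≤ nuclear N := by
  unfold nuclear; positivity

lemma frob_le_nuclear {n : ℕ} (N : Matrix (Fin n) (Fin n) ℝ) : frob N ≤ nuclear N := by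
  set hN : (Nᵀ * N).IsHermitian := isHermitian_conjTranspose_mul_self N
  have hev : ∀ j, 0 ≤ hN.eigenvalues j := fun j => by
    rw [← norm_sq_toEuclideanLin_eigenvectorBasis]; positivity
  have hfrob : frob N ^ 2 = ∑ j, hN.eigenvalues j := by
    simp only [frob_sq, ip_eq_sum_inner N N hN.eigenvectorBasis, real_inner_self_eq_norm_sq,
      norm_sq_toEuclideanLin_eigenvectorBasis]
  refine (sq_le_sq₀ (frob_nonneg N) (nuclear_nonneg N)).mp ?_
  rw [hfrob]
  calc ∑ j, hN.eigenvalues j = ∑ j, √(hN.eigenvalues j) ^ 2 := by simp only [Real.sq_sqrt (hev _)]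
    _ ≤ (∑ j, √(hN.eigenvalues j)) ^ 2 :=
        Finset.sum_sq_le_sq_sum_of_nonneg fun j _ => Real.sqrt_nonneg _

section tangent

variable {n r : ℕ} (U V : Matrix (Fin n) (Fin r) ℝ)

lemma PT_add (A B : Matrix (Fin n) (Fin n) ℝ) : PT U V (A + B) = PT U V A + PT U V B := by
  simp only [PT, Matrix.mul_add, Matrix.add_mul]; abel

lemma PT_sub (A B : Matrix (Fin n) (Fin n) ℝ) : PT U V (A - B) = PT U V A - PT U V B := by
  simp only [PT, Matrix.mul_sub, Matrix.sub_mul]; abel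

lemma PT_smul (c : ℝ) (A : Matrix (Fin n) (Fin n) ℝ) : PT U V (c • A) = c • PT U V A := by
  simp only [PT, Matrix.mul_smul, Matrix.smul_mul, smul_sub, smul_add]

lemma ip_PT_left (A B : Matrix (Fin n) (Fin n) ℝ) : ip (PT U V A) B = ip A (PT U V B) := by
  have hUU : (U * Uᵀ)ᵀ = U * Uᵀ := by rw [transpose_mul, transpose_transpose]
  have hVV : (V * Vᵀ)ᵀ = V * Vᵀ := by rw [transpose_mul, transpose_transpose]
  simp only [PT, ip_add_left, ip_sub_left, ip_add_right, ip_sub_right,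
    ip_mul_left_of_symm hUU, ip_mul_right_of_symm hVV]
  rw [Matrix.mul_assoc (U * Uᵀ) B]

variable {U V}

lemma PT_PT (hU : Uᵀ * U = 1) (hV : Vᵀ * V = 1) (A : Matrix (Fin n) (Fin n) ℝ) :
    PT U V (PT U V A) = PT U V A := by
  have hUcancel : ∀ X : Matrix (Fin r) (Fin n) ℝ, Uᵀ * (U * X) = X := fun X => by
    rw [← Matrix.mul_assoc, hU, Matrix.one_mul]
  have hVcancel : ∀ X : Matrix (Fin r) (Fin n) ℝ, Vᵀ * (V * X) = X := fun X => by
    rw [← Matrix.mul_assoc, hV, Matrix.one_mul]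
  simp only [PT, Matrix.mul_add, Matrix.add_mul, Matrix.mul_sub, Matrix.sub_mul,
    Matrix.mul_assoc, hUcancel, hVcancel]
  abel

lemma PT_PTperp (hU : Uᵀ * U = 1) (hV : Vᵀ * V = 1) (A : Matrix (Fin n) (Fin n) ℝ) :
    PT U V (PTperp U V A) = 0 := by
  rw [PTperp, PT_sub, PT_PT hU hV, sub_self]

lemma PT_mul_transpose (hU : Uᵀ * U = 1) (hV : Vᵀ * V = 1) : PT U V (U * Vᵀ) = U * Vᵀ := by
  have hUleft : U * Uᵀ * (U * Vᵀ) = U * Vᵀ := by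
    rw [Matrix.mul_assoc, ← Matrix.mul_assoc Uᵀ, hU, Matrix.one_mul]
  have hVright : U * Vᵀ * (V * Vᵀ) = U * Vᵀ := by
    rw [Matrix.mul_assoc, ← Matrix.mul_assoc Vᵀ, hV, Matrix.one_mul]
  rw [PT, hUleft, hVright, add_sub_cancel_right]

lemma ip_eq_ip_PT_of_PT_eq {X : Matrix (Fin n) (Fin n) ℝ} (hX : PT U V X = X)
    (Z : Matrix (Fin n) (Fin n) ℝ) : ip X Z = ip X (PT U V Z) := by
  conv_lhs => rw [← hX]
  exact ip_PT_left U V X Z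

lemma ip_eq_ip_PTperp_of_PT_eq_zero {W : Matrix (Fin n) (Fin n) ℝ} (hW : PT U V W = 0)
    (Z : Matrix (Fin n) (Fin n) ℝ) : ip W Z = ip W (PTperp U V Z) := by
  rw [PTperp, ip_sub_right, ← ip_PT_left, hW]
  simp only [ip, transpose_zero, Matrix.zero_mul, trace_zero, sub_zero]

end tangent

theorem stmt18_general (n r : ℕ) (U V : Matrix (Fin n) (Fin r) ℝ)
    (hU : Uᵀ * U = 1) (hV : Vᵀ * V = 1)
    (lam a b : ℝ) (hb : b < 1)
    (Φ Y W Z : Matrix (Fin n) (Fin n) ℝ)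
    (hWT : PT U V W = 0)
    (hWdual : ip W (PTperp U V Z) = nuclear (PTperp U V Z))
    (ha : frob (U * Vᵀ - lam • PT U V Φ - PT U V Y) ≤ a)
    (hbnd : spec (lam • PTperp U V Φ + PTperp U V Y) ≤ b) :
    ip (U * Vᵀ + W - lam • Φ - Y) Z ≥
      -a * frob (PT U V Z) + (1 - b) * frob (PTperp U V Z) := by
  set X := U * Vᵀ - lam • PT U V Φ - PT U V Y
  set R := lam • PTperp U V Φ + PTperp U V Y
  have hsplit : U * Vᵀ + W - lam • Φ - Y = X + W - R := by
    simp only [X, R, PTperp]; module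
  have hX : PT U V X = X := by
    simp only [X, PT_sub, PT_smul, PT_mul_transpose hU hV, PT_PT hU hV]
  have hR : PT U V R = 0 := by
    simp only [R, PT_add, PT_smul, PT_PTperp hU hV, smul_zero, add_zero]
  have hXZ : -(a * frob (PT U V Z)) ≤ ip X Z := by
    rw [ip_eq_ip_PT_of_PT_eq hX]
    calc -(a * frob (PT U V Z)) ≤ -(frob X * frob (PT U V Z)) := by
          gcongr; exact frob_nonneg _
      _ ≤ ip X (PT U V Z) := neg_le_of_abs_le (abs_ip_le_frob_mul_frob _ _)
  have hRZ : ip R Z ≤ b * nuclear (PTperp U V Z) := by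
    rw [ip_eq_ip_PTperp_of_PT_eq_zero hR]
    exact (ip_le_spec_mul_nuclear R _).trans (by gcongr; exact nuclear_nonneg _)
  have hWZ : ip W Z = nuclear (PTperp U V Z) := by
    rw [ip_eq_ip_PTperp_of_PT_eq_zero hWT, hWdual]
  have hFrobNuc :=
    mul_le_mul_of_nonneg_left (frob_le_nuclear (PTperp U V Z)) (sub_nonneg.2 hb.le)
  rw [hsplit, ip_sub_left, ip_add_left, hWZ]
  linarith

theorem stmt18 (n r : ℕ) (U V : Matrix (Fin n) (Fin r) ℝ)
    (hU : Uᵀ * U = 1) (hV : Vᵀ * V = 1)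
    (lam a b : ℝ) (hb : b < 1)
    (Φ Y W Z : Matrix (Fin n) (Fin n) ℝ) (hZ : Z ≠ 0)
    (hYZ : ip Y Z = 0)
    (hWT : PT U V W = 0) (hWspec : spec W ≤ 1)
    (hWdual : ip W (PTperp U V Z) = nuclear (PTperp U V Z))
    (ha : frob (U * Vᵀ - lam • PT U V Φ - PT U V Y) ≤ a)
    (hbnd : spec (lam • PTperp U V Φ + PTperp U V Y) ≤ b) :
    ip (U * Vᵀ + W - lam • Φ - Y) Z ≥
      -a * frob (PT U V Z) + (1 - b) * frob (PTperp U V Z) :=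
  stmt18_general n r U V hU hV lam a b hb Φ Y W Z hWT hWdual ha hbnd
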